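/- arXiv:2005.04575 — 2 statements merged into one kernel-verified Lean document; each statement's English description precedes it below -/
import Mathlib

section
/- Let (ξ_i, 𝔉_i) be martingale differences with E|ξ_i|^β < ∞ for some β ∈ (1,2), S_n = Σ ξ_i, and G_n(β) = Σ (ξ_i⁺)^β + Σ E[(ξ_i⁻)^β | 𝔉_{i-1}]. Then for every λ > 0 the process V_k(λ) = exp{λ S_k - λ^β G_k(β)} is a supermartingale with E[V_n(λ)] ≤ 1. -/
/-!
For `1 ≤ β ≤ 2` one has the elementary inequality `exp (y - (y⁺) ^ β) ≤ 1 + y + (y⁻) ^ β`.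
Applied to `y = λ ξᵢ` and conditioned on `𝔉ᵢ₋₁`, the martingale-difference property kills the
linear term, so `E[exp (λ ξᵢ - λ ^ β (ξᵢ⁺) ^ β) | 𝔉ᵢ₋₁] ≤ 1 + λ ^ β Aᵢ ≤ exp (λ ^ β Aᵢ)` with
`Aᵢ = E[(ξᵢ⁻) ^ β | 𝔉ᵢ₋₁]`. Thus `V` is a product of nonnegative factors of conditional mean at
most `1`, started at `V₀ = 1`. The factors are bounded because `y - (y⁺) ^ β ≤ 1` and `Aᵢ ≥ 0`, so
every `Vₖ` is integrable, `V` is a supermartingale, and `E[Vₙ] ≤ E[V₀] = 1`.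
-/

open MeasureTheory Real Finset

namespace Real

variable {β : ℝ}

/- For `t ≤ 1` both bounds come from `t ^ 2 ≤ t ^ β` and `(1 + t) * (1 - t + t ^ 2) = 1 + t ^ 3`;
for `t ≥ 1` from `t ≤ t ^ β`. -/
theorem exp_sub_rpow_le_one_add (hβ1 : 1 ≤ β) (hβ2 : β ≤ 2) {t : ℝ} (ht : 0 ≤ t) :
    exp (t - t ^ β) ≤ 1 + t := by
  rcases le_total t 1 with ht1 | ht1
  · have hsq : t ^ 2 ≤ t ^ β := by
      simpa using rpow_le_rpow_of_exponent_ge' ht ht1 (by linarith) hβ2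
    have hpos : 0 < 1 - t + t ^ 2 := by nlinarith
    calc exp (t - t ^ β) ≤ exp (t - t ^ 2) := exp_le_exp.2 (by linarith)
      _ = 1 / exp (t ^ 2 - t) := by rw [one_div, ← exp_neg, neg_sub]
      _ ≤ 1 / (1 - t + t ^ 2) :=
        one_div_le_one_div_of_le hpos (by linarith [add_one_le_exp (t ^ 2 - t)])
      _ ≤ 1 + t := by
        rw [div_le_iff₀ hpos]
        nlinarith [pow_nonneg ht 3]
  · have := self_le_rpow_of_one_le ht1 hβ1
    linarith [exp_le_one_iff.2 (by linarith : t - t ^ β ≤ 0)]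

theorem exp_neg_le_one_sub_add_rpow (hβ1 : 1 ≤ β) (hβ2 : β ≤ 2) {t : ℝ} (ht : 0 ≤ t) :
    exp (-t) ≤ 1 - t + t ^ β := by
  rcases le_total t 1 with ht1 | ht1
  · have hsq : t ^ 2 ≤ t ^ β := by
      simpa using rpow_le_rpow_of_exponent_ge' ht ht1 (by linarith) hβ2
    calc exp (-t) = 1 / exp t := by rw [exp_neg, one_div]
      _ ≤ 1 / (1 + t) := one_div_le_one_div_of_le (by linarith) (by linarith [add_one_le_exp t])
      _ ≤ 1 - t + t ^ 2 := by
        rw [div_le_iff₀ (by linarith)]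
        nlinarith [pow_nonneg ht 3]
      _ ≤ 1 - t + t ^ β := by linarith
  · have := self_le_rpow_of_one_le ht1 hβ1
    linarith [exp_le_one_iff.2 (by linarith : -t ≤ 0)]

theorem exp_sub_max_rpow_le (hβ1 : 1 ≤ β) (hβ2 : β ≤ 2) (y : ℝ) :
    exp (y - max y 0 ^ β) ≤ 1 + y + max (-y) 0 ^ β := by
  have hβ0 : β ≠ 0 := by positivity
  rcases le_total 0 y with hy | hy
  · rw [max_eq_left hy, max_eq_right (by linarith), zero_rpow hβ0, add_zero]
    exact exp_sub_rpow_le_one_add hβ1 hβ2 hy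
  · rw [max_eq_right hy, max_eq_left (by linarith), zero_rpow hβ0, sub_zero]
    simpa [sub_eq_add_neg] using exp_neg_le_one_sub_add_rpow hβ1 hβ2 (neg_nonneg.2 hy)

theorem sub_max_rpow_le_one (hβ1 : 1 ≤ β) (y : ℝ) : y - max y 0 ^ β ≤ 1 := by
  rcases le_total y 1 with hy | hy
  · linarith [rpow_nonneg (le_max_right y 0) β]
  · rw [max_eq_left (by linarith)]
    linarith [self_le_rpow_of_one_le hy hβ1]

theorem max_mul_zero_rpow {c : ℝ} (hc : 0 ≤ c) (x : ℝ) :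
    max (c * x) 0 ^ β = c ^ β * max x 0 ^ β := by
  rw [← mul_rpow hc (le_max_right x 0), mul_max_of_nonneg _ _ hc, mul_zero]

end Real

noncomputable def expIncrement {Ω : Type*} {m0 : MeasurableSpace Ω} (μ : Measure Ω)
    (m : MeasurableSpace Ω) (ξ : Ω → ℝ) (β c : ℝ) : Ω → ℝ :=
  fun ω => exp (c * ξ ω - c ^ β * (max (ξ ω) 0 ^ β + μ[fun ω' => max (-ξ ω') 0 ^ β | m] ω))

section OneStep

variable {Ω : Type*} {m m0 : MeasurableSpace Ω} {μ : Measure Ω} {ξ : Ω → ℝ} {β c : ℝ}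

theorem integrable_of_integrable_abs_rpow [IsFiniteMeasure μ] (hβ : 1 ≤ β)
    (hξ : AEStronglyMeasurable ξ μ) (hmom : Integrable (fun ω => |ξ ω| ^ β) μ) :
    Integrable ξ μ := by
  have hp : ENNReal.ofReal β ≠ 0 := by simp only [ne_eq, ENNReal.ofReal_eq_zero, not_le]; linarith
  refine MemLp.integrable (q := ENNReal.ofReal β) (by simpa using hβ) ?_
  rw [← integrable_norm_rpow_iff hξ hp ENNReal.ofReal_ne_top, ENNReal.toReal_ofReal (by linarith)]
  simpa only [Real.norm_eq_abs] using hmom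

theorem integrable_max_neg_rpow (hβ : 0 ≤ β) (hξ : AEStronglyMeasurable ξ μ)
    (hmom : Integrable (fun ω => |ξ ω| ^ β) μ) :
    Integrable (fun ω => max (-ξ ω) 0 ^ β) μ := by
  refine hmom.mono' ?_ (ae_of_all _ fun ω => ?_)
  · exact ((hξ.aemeasurable.neg.max aemeasurable_const).pow_const β).aestronglyMeasurable
  · rw [norm_of_nonneg (rpow_nonneg (le_max_right _ _) _)]
    exact rpow_le_rpow (le_max_right _ _) (max_le (neg_le_abs _) (abs_nonneg _)) hβ

theorem stronglyMeasurable_expIncrement {m' : MeasurableSpace Ω} (hm : m ≤ m')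
    (hξ : StronglyMeasurable[m'] ξ) : StronglyMeasurable[m'] (expIncrement μ m ξ β c) := by
  have hA := (stronglyMeasurable_condExp (m := m) (μ := μ)
    (f := fun ω' => max (-ξ ω') 0 ^ β)).mono hm
  exact (((hξ.measurable.const_mul c).sub (((hξ.measurable.max measurable_const).pow_const β).add
    hA.measurable |>.const_mul _)).exp).stronglyMeasurable

theorem norm_expIncrement_le (hβ : 1 ≤ β) (hc : 0 ≤ c) :
    ∀ᵐ ω ∂μ, ‖expIncrement μ m ξ β c ω‖ ≤ exp 1 := by
  filter_upwards [condExp_nonneg (m := m) (μ := μ) (f := fun ω' => max (-ξ ω') 0 ^ β)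
    (ae_of_all _ fun _ => rpow_nonneg (le_max_right _ _) _)] with ω hA
  rw [expIncrement, norm_of_nonneg (exp_pos _).le, exp_le_exp, mul_add, ← sub_sub,
    ← max_mul_zero_rpow hc]
  linarith [sub_max_rpow_le_one hβ (c * ξ ω), mul_nonneg (rpow_nonneg hc β) hA]

theorem integrable_exp_sub_max_rpow [IsFiniteMeasure μ] (hβ : 1 ≤ β) (hc : 0 ≤ c)
    (hξ : AEStronglyMeasurable ξ μ) :
    Integrable (fun ω => exp (c * ξ ω - c ^ β * max (ξ ω) 0 ^ β)) μ := by
  refine Integrable.of_bound ?_ (exp 1) (ae_of_all _ fun ω => ?_)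
  · exact ((hξ.aemeasurable.const_mul c).sub (((hξ.aemeasurable.max aemeasurable_const).pow_const
      β).const_mul _)).exp.aestronglyMeasurable
  · rw [norm_of_nonneg (exp_pos _).le, exp_le_exp, ← max_mul_zero_rpow hc]
    exact sub_max_rpow_le_one hβ _

theorem condExp_exp_sub_max_rpow_le [IsFiniteMeasure μ] (hm : m ≤ m0) (hβ1 : 1 ≤ β) (hβ2 : β ≤ 2)
    (hc : 0 ≤ c) (hξ : StronglyMeasurable ξ) (hmom : Integrable (fun ω => |ξ ω| ^ β) μ)
    (hmart : μ[ξ | m] =ᵐ[μ] 0) :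
    μ[fun ω => exp (c * ξ ω - c ^ β * max (ξ ω) 0 ^ β) | m] ≤ᵐ[μ]
      fun ω => 1 + c ^ β * μ[fun ω' => max (-ξ ω') 0 ^ β | m] ω := by
  set N : Ω → ℝ := fun ω => max (-ξ ω) 0 ^ β
  set Y : Ω → ℝ := fun ω => exp (c * ξ ω - c ^ β * max (ξ ω) 0 ^ β)
  have hξint := integrable_of_integrable_abs_rpow hβ1 hξ.aestronglyMeasurable hmom
  have hNint : Integrable N μ :=
    integrable_max_neg_rpow (by linarith) hξ.aestronglyMeasurable hmom
  have hYint : Integrable Y μ := integrable_exp_sub_max_rpow hβ1 hc hξ.aestronglyMeasurable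
  have hYle : Y ≤ (fun _ => 1) + c • ξ + c ^ β • N := fun ω => by
    have := exp_sub_max_rpow_le hβ1 hβ2 (c * ξ ω)
    rw [max_mul_zero_rpow hc, ← mul_neg, max_mul_zero_rpow hc] at this
    simpa only [Pi.add_apply, Pi.smul_apply, smul_eq_mul] using this
  have hsum : μ[(fun _ => 1) + c • ξ + c ^ β • N | m] =ᵐ[μ] (fun _ => 1) + c ^ β • μ[N | m] := by
    filter_upwards [condExp_add ((integrable_const 1).add (hξint.smul c)) (hNint.smul (c ^ β)) m,
      condExp_add (integrable_const 1) (hξint.smul c) m, condExp_smul c ξ m,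
      condExp_smul (c ^ β) N m, hmart] with ω h₁ h₂ h₃ h₄ h₅
    simp only [h₁, Pi.add_apply, h₂, h₃, h₄, h₅, condExp_const hm, Pi.smul_apply, Pi.zero_apply,
      smul_zero, add_zero]
  calc μ[Y | m] ≤ᵐ[μ] μ[(fun _ => 1) + c • ξ + c ^ β • N | m] :=
        condExp_mono hYint (((integrable_const 1).add (hξint.smul c)).add (hNint.smul _))
          (ae_of_all _ hYle)
    _ =ᵐ[μ] (fun _ => 1) + c ^ β • μ[N | m] := hsum

theorem condExp_expIncrement_le_one [IsFiniteMeasure μ] (hm : m ≤ m0) (hβ1 : 1 ≤ β)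
    (hβ2 : β ≤ 2) (hc : 0 ≤ c) (hξ : StronglyMeasurable ξ)
    (hmom : Integrable (fun ω => |ξ ω| ^ β) μ) (hmart : μ[ξ | m] =ᵐ[μ] 0) :
    μ[expIncrement μ m ξ β c | m] ≤ᵐ[μ] 1 := by
  set A : Ω → ℝ := μ[fun ω' => max (-ξ ω') 0 ^ β | m]
  set Y : Ω → ℝ := fun ω => exp (c * ξ ω - c ^ β * max (ξ ω) 0 ^ β)
  have hsplit : expIncrement μ m ξ β c = (fun ω => exp (-(c ^ β * A ω))) * Y := by
    funext ω
    simp only [expIncrement, Pi.mul_apply, Y, A, ← exp_add]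
    ring_nf
  have hint : Integrable (expIncrement μ m ξ β c) μ :=
    Integrable.of_bound ((stronglyMeasurable_expIncrement hm hξ).aestronglyMeasurable) _
      (norm_expIncrement_le hβ1 hc)
  have hfac : StronglyMeasurable[m] fun ω => exp (-(c ^ β * A ω)) :=
    (stronglyMeasurable_condExp.measurable.const_mul _).neg.exp.stronglyMeasurable
  rw [hsplit] at hint ⊢
  filter_upwards [condExp_mul_of_stronglyMeasurable_left hfac hint
      (integrable_exp_sub_max_rpow hβ1 hc hξ.aestronglyMeasurable),
    condExp_exp_sub_max_rpow_le hm hβ1 hβ2 hc hξ hmom hmart] with ω hpull hY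
  rw [hpull, Pi.mul_apply, Pi.one_apply]
  calc exp (-(c ^ β * A ω)) * μ[Y | m] ω ≤ exp (-(c ^ β * A ω)) * exp (c ^ β * A ω) :=
        mul_le_mul_of_nonneg_left (hY.trans (by linarith [add_one_le_exp (c ^ β * A ω)]))
          (exp_pos _).le
    _ = 1 := by rw [← exp_add, neg_add_cancel, exp_zero]

end OneStep

theorem supermartingale_of_mul_condExp_le_one {Ω : Type*} {m0 : MeasurableSpace Ω}
    {μ : Measure Ω} [IsFiniteMeasure μ] {ℱ : Filtration ℕ m0} {V Z : ℕ → Ω → ℝ} {C : ℝ}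
    (hV0 : V 0 = 1) (hrec : ∀ k, V (k + 1) = V k * Z k)
    (hZm : ∀ k, StronglyMeasurable[ℱ (k + 1)] (Z k)) (hZnn : ∀ k ω, 0 ≤ Z k ω)
    (hZC : ∀ k, ∀ᵐ ω ∂μ, ‖Z k ω‖ ≤ C) (hle : ∀ k, μ[Z k | ℱ k] ≤ᵐ[μ] 1) :
    Supermartingale V ℱ μ := by
  have hadp : StronglyAdapted ℱ V := fun k => by
    induction k with
    | zero => rw [hV0]; exact stronglyMeasurable_const
    | succ k ih => rw [hrec]; exact (ih.mono (ℱ.mono k.le_succ)).mul (hZm k)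
  have hnn : ∀ k ω, 0 ≤ V k ω := fun k => by
    induction k with
    | zero => simp [hV0]
    | succ k ih => intro ω; rw [hrec]; exact mul_nonneg (ih ω) (hZnn k ω)
  have hZint : ∀ k, Integrable (Z k) μ := fun k =>
    .of_bound ((hZm k).mono (ℱ.le _)).aestronglyMeasurable C (hZC k)
  have hint : ∀ k, Integrable (V k) μ := fun k => by
    induction k with
    | zero => rw [hV0]; exact integrable_const 1
    | succ k ih => rw [hrec]; exact ih.mul_bdd (hZint k).aestronglyMeasurable (hZC k)
  refine supermartingale_nat hadp hint fun k => ?_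
  filter_upwards [condExp_mul_of_stronglyMeasurable_left (hadp k) (hrec k ▸ hint (k + 1))
    (hZint k), hle k] with ω hpull hZ
  rw [hrec, hpull]
  exact mul_le_of_le_one_right (hnn k ω) hZ

theorem stmt_13 {Ω : Type*} {m : MeasurableSpace Ω} {μ : Measure Ω} [IsProbabilityMeasure μ]
    (ℱ : Filtration ℕ m)
    (ξ : ℕ → Ω → ℝ)
    (hadp : ∀ i, StronglyMeasurable[ℱ i] (ξ i))
    (β : ℝ) (hβ1 : 1 < β) (hβ2 : β < 2)
    (hmom : ∀ i, Integrable (fun ω => |ξ i ω| ^ β) μ)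
    (hmart : ∀ i : ℕ, 1 ≤ i → μ[ξ i | ℱ (i - 1)] =ᵐ[μ] 0)
    (n : ℕ) (lam : ℝ) (hlam : 0 < lam)
    (S G : ℕ → Ω → ℝ)
    (hS : S = fun k ω => ∑ i ∈ Finset.Icc 1 k, ξ i ω)
    (hG : G = fun k ω =>
      (∑ i ∈ Finset.Icc 1 k, (max (ξ i ω) 0) ^ β)
        + ∑ i ∈ Finset.Icc 1 k, (μ[fun ω' => (max (-(ξ i ω')) 0) ^ β | ℱ (i - 1)]) ω)
    (V : ℕ → Ω → ℝ)
    (hV : V = fun k ω => Real.exp (lam * S k ω - lam ^ β * G k ω)) :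
    Supermartingale V ℱ μ ∧ ∫ ω, V n ω ∂μ ≤ 1 := by
  have hV0 : V 0 = 1 := by
    funext ω
    simp [hV, hS, hG]
  have hrec : ∀ k, V (k + 1) = V k * expIncrement μ (ℱ k) (ξ (k + 1)) β lam := fun k => by
    funext ω
    simp only [hV, hS, hG, expIncrement, Pi.mul_apply, ← exp_add,
      sum_Icc_succ_top (Nat.le_add_left 1 k), Nat.add_sub_cancel]
    ring_nf
  have hsup : Supermartingale V ℱ μ :=
    supermartingale_of_mul_condExp_le_one hV0 hrec
      (fun k => stronglyMeasurable_expIncrement (ℱ.mono k.le_succ) (hadp (k + 1)))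
      (fun _ _ => (exp_pos _).le) (fun _ => norm_expIncrement_le hβ1.le hlam.le)
      (fun k => condExp_expIncrement_le_one (ℱ.le k) hβ1.le hβ2.le hlam.le
        ((hadp _).mono (ℱ.le _)) (hmom _) (by simpa using hmart (k + 1) le_add_self))
  refine ⟨hsup, ?_⟩
  calc ∫ ω, V n ω ∂μ ≤ ∫ ω, V 0 ω ∂μ := by
        simpa using hsup.setIntegral_le (Nat.zero_le n) MeasurableSet.univ
    _ = 1 := by simp [hV0]
end

section
/- Let (ξ_i, 𝔉_i) be martingale differences with E|ξ_i|^β < ∞ for some β ∈ (1,2), S_n = Σ ξ_i, G_n(β) = Σ (ξ_i⁺)^β + Σ E[(ξ_i⁻)^β | 𝔉_{i-1}]. Then for all x > 0 and p > 1, P(S_n ≥ x G_n(β)) ≤ (E[exp{(p-1)(x/β)^{β/(β-1)} (1-β) G_n(β)}])^{1/p}. -/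
open MeasureTheory Real Finset

/-!
For `λ ≥ 0`, `exp (λ S_n - λ ^ β G_n(β))` has expectation at most `1`. Stepwise this is the
elementary inequality `exp (t - (t⁺) ^ β) ≤ 1 + t + (t⁻) ^ β` for `β ∈ [1, 2]`: conditioning
on `𝔉_{k-1}` kills the linear term and leaves
`1 + E[(ξ_k⁻) ^ β | 𝔉_{k-1}] ≤ exp E[(ξ_k⁻) ^ β | 𝔉_{k-1}]`, which is exactly what `G` subtracts.
On `{S_n ≥ x G_n}` the exponent is at least `(β - 1) λ ^ β G_n`, and Hölder's inequality with
exponents `p / (p - 1)` and `p` bounds the probability of that event by the claimed moment of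
`exp (-(p - 1)(β - 1) λ ^ β G_n)`.
-/

namespace SelfNormalizedMartingale

lemma exp_le_one_add_add_sq {u : ℝ} (hu : |u| ≤ 1) : exp u ≤ 1 + u + u ^ 2 := by
  linarith [le_abs_self (exp u - 1 - u), abs_exp_sub_one_sub_id_le hu]

lemma sq_le_rpow_of_le_one {s β : ℝ} (hs0 : 0 ≤ s) (hs1 : s ≤ 1) (hβ0 : 0 ≤ β) (hβ2 : β ≤ 2) :
    s ^ 2 ≤ s ^ β := by
  simpa [rpow_two] using rpow_le_rpow_of_exponent_ge' hs0 hs1 hβ0 hβ2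

theorem exp_sub_rpow_max_le {β : ℝ} (hβ1 : 1 ≤ β) (hβ2 : β ≤ 2) (t : ℝ) :
    exp (t - max t 0 ^ β) ≤ 1 + t + max (-t) 0 ^ β := by
  have hβ0 : β ≠ 0 := by positivity
  rcases le_total t 0 with ht | ht
  · rw [max_eq_right ht, max_eq_left (neg_nonneg.2 ht), zero_rpow hβ0, sub_zero]
    rcases le_total (-t) 1 with ht1 | ht1
    · have hsq := sq_le_rpow_of_le_one (neg_nonneg.2 ht) ht1 (by linarith) hβ2
      have hexp := exp_le_one_add_add_sq (abs_le.2 ⟨by linarith, by linarith⟩ : |t| ≤ 1)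
      nlinarith
    · linarith [self_le_rpow_of_one_le ht1 hβ1, exp_le_one_iff.2 ht]
  · rw [max_eq_left ht, max_eq_right (neg_nonpos.2 ht), zero_rpow hβ0, add_zero]
    rcases le_total t 1 with ht1 | ht1
    · -- `s := t - t ^ β` lies in `[0, t - t ^ 2]`, and `s + s ^ 2 ≤ t` there.
      have hsq := sq_le_rpow_of_le_one ht ht1 (by linarith) hβ2
      have hle := rpow_le_self_of_le_one ht ht1 hβ1
      have hexp := exp_le_one_add_add_sq
        (abs_le.2 ⟨by linarith, by linarith [rpow_nonneg ht β]⟩ : |t - t ^ β| ≤ 1)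
      nlinarith
    · linarith [self_le_rpow_of_one_le ht1 hβ1, exp_le_one_iff.2 (sub_nonpos.2 <|
        self_le_rpow_of_one_le ht1 hβ1)]

lemma sub_rpow_max_le_one {β : ℝ} (hβ1 : 1 ≤ β) (t : ℝ) : t - max t 0 ^ β ≤ 1 := by
  rcases le_total t 1 with ht1 | ht1
  · linarith [rpow_nonneg (le_max_right t 0) β]
  · rw [max_eq_left (by linarith)]
    linarith [self_le_rpow_of_one_le ht1 hβ1]

variable {Ω : Type*} {m : MeasurableSpace Ω} {μ : Measure Ω}

lemma measurable_rpow_max (β : ℝ) : Measurable fun t : ℝ => max t 0 ^ β := by fun_prop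

lemma integrable_of_integrable_abs_rpow [IsFiniteMeasure μ] {f : Ω → ℝ} {β : ℝ} (hβ : 1 ≤ β)
    (hf : AEStronglyMeasurable f μ) (hint : Integrable (fun ω => |f ω| ^ β) μ) :
    Integrable f μ := by
  have := integrable_norm_rpow_of_le hf zero_le_one (by linarith) hβ hint
  exact (integrable_norm_iff hf).1 (by simpa using this)

lemma integrable_rpow_max_neg {f : Ω → ℝ} {β : ℝ} (hβ : 0 ≤ β)
    (hf : AEStronglyMeasurable f μ) (hint : Integrable (fun ω => |f ω| ^ β) μ) :
    Integrable (fun ω => max (-f ω) 0 ^ β) μ :=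
  hint.mono'
    ((measurable_rpow_max β).comp_aemeasurable hf.neg.aemeasurable).aestronglyMeasurable <|
    ae_of_all _ fun ω => by
      rw [norm_of_nonneg (rpow_nonneg (le_max_right _ _) β)]
      exact rpow_le_rpow (le_max_right _ _) (max_le (neg_le_abs _) (abs_nonneg _)) hβ

lemma memLp_top_exp_sub_rpow_max {ξ : Ω → ℝ} {β : ℝ} (hβ1 : 1 ≤ β)
    (hξ : AEStronglyMeasurable ξ μ) : MemLp (fun ω => exp (ξ ω - max (ξ ω) 0 ^ β)) ⊤ μ :=
  memLp_top_of_bound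
    (continuous_exp.comp_aestronglyMeasurable
      (hξ.sub ((measurable_rpow_max β).comp_aemeasurable hξ.aemeasurable).aestronglyMeasurable))
    (exp 1) (ae_of_all _ fun ω => by simpa using exp_le_exp.2 (sub_rpow_max_le_one hβ1 (ξ ω)))

theorem condExp_exp_sub_rpow_max_le {mk : MeasurableSpace Ω} (hmk : mk ≤ m) [IsFiniteMeasure μ]
    {β : ℝ} (hβ1 : 1 ≤ β) (hβ2 : β ≤ 2) {ξ : Ω → ℝ} (hξ : AEStronglyMeasurable[m] ξ μ)
    (hmom : Integrable (fun ω => |ξ ω| ^ β) μ) (hmart : μ[ξ | mk] =ᵐ[μ] 0) :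
    μ[fun ω => exp (ξ ω - max (ξ ω) 0 ^ β) | mk]
      ≤ᵐ[μ] fun ω => exp (μ[fun ω => max (-ξ ω) 0 ^ β | mk] ω) := by
  have hξi := integrable_of_integrable_abs_rpow hβ1 hξ hmom
  have hneg := integrable_rpow_max_neg (by linarith) hξ hmom
  have hexp := (memLp_top_exp_sub_rpow_max hβ1 hξ).integrable le_top
  have hmono := condExp_mono (m := mk) hexp (((integrable_const 1).add hξi).add hneg)
    (ae_of_all _ fun ω => exp_sub_rpow_max_le hβ1 hβ2 (ξ ω))
  have hadd := condExp_add ((integrable_const 1).add hξi) hneg mk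
  have hadd' := condExp_add (integrable_const 1) hξi mk
  filter_upwards [hmono, hadd, hadd', hmart] with ω h1 h2 h3 h4
  refine h1.trans (le_of_eq_of_le ?_ (add_one_le_exp _))
  change μ[(fun _ => (1 : ℝ)) + ξ + fun ω => max (-ξ ω) 0 ^ β | mk] ω = _
  rw [h2, Pi.add_apply, h3, Pi.add_apply, condExp_const hmk, h4]
  simp [add_comm]

theorem integral_mul_exp_sub_condExp_le {mk : MeasurableSpace Ω} (hmk : mk ≤ m)
    [IsFiniteMeasure μ] {β : ℝ} (hβ1 : 1 ≤ β) (hβ2 : β ≤ 2) {ξ : Ω → ℝ}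
    (hξ : AEStronglyMeasurable[m] ξ μ) (hmom : Integrable (fun ω => |ξ ω| ^ β) μ)
    (hmart : μ[ξ | mk] =ᵐ[μ] 0) {Y : Ω → ℝ} (hY : StronglyMeasurable[mk] Y) (hY0 : 0 ≤ Y)
    (hYi : Integrable Y μ) :
    ∫ ω, Y ω * exp (ξ ω - max (ξ ω) 0 ^ β - μ[fun ω => max (-ξ ω) 0 ^ β | mk] ω) ∂μ
      ≤ ∫ ω, Y ω ∂μ := by
  set g := μ[fun ω => max (-ξ ω) 0 ^ β | mk]
  set h := fun ω => exp (ξ ω - max (ξ ω) 0 ^ β)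
  set Z := fun ω => Y ω * exp (-g ω)
  have hg0 : 0 ≤ᵐ[μ] g :=
    condExp_nonneg (ae_of_all _ fun ω => rpow_nonneg (le_max_right _ _) β)
  have hZ : StronglyMeasurable[mk] Z :=
    hY.mul (continuous_exp.comp_stronglyMeasurable stronglyMeasurable_condExp.neg)
  have hZ0 : 0 ≤ Z := fun ω => mul_nonneg (hY0 ω) (exp_pos _).le
  have hZi : Integrable Z μ := by
    refine hYi.mono' (hZ.mono hmk).aestronglyMeasurable ?_
    filter_upwards [hg0] with ω hω
    rw [norm_of_nonneg (hZ0 ω)]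
    exact mul_le_of_le_one_right (hY0 ω) (exp_le_one_iff.2 (neg_nonpos.2 hω))
  have hh := memLp_top_exp_sub_rpow_max hβ1 hξ
  have hpull := condExp_mul_of_stronglyMeasurable_right hZ (hZi.mul_of_top_right hh)
    (hh.integrable le_top)
  have hcond := condExp_exp_sub_rpow_max_le hmk hβ1 hβ2 hξ hmom hmart
  calc ∫ ω, Y ω * exp (ξ ω - max (ξ ω) 0 ^ β - g ω) ∂μ
      = ∫ ω, (h * Z) ω ∂μ := by
        congr 1 with ω
        simp only [Pi.mul_apply, h, Z, exp_sub, exp_neg]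
        ring
    _ = ∫ ω, μ[h * Z | mk] ω ∂μ := (integral_condExp hmk).symm
    _ ≤ ∫ ω, Y ω ∂μ := by
        refine integral_mono_ae integrable_condExp hYi ?_
        filter_upwards [hpull, hcond] with ω hω hle
        rw [hω, Pi.mul_apply]
        calc μ[h | mk] ω * Z ω ≤ exp (g ω) * Z ω :=
              mul_le_mul_of_nonneg_right hle (hZ0 ω)
          _ = Y ω := by
            simp only [Z, mul_left_comm (exp (g ω)), ← exp_add, add_neg_cancel, exp_zero, mul_one]

noncomputable def selfNormalizer (μ : Measure Ω) (𝔉 : ℕ → MeasurableSpace Ω) (ξ : ℕ → Ω → ℝ)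
    (β : ℝ) (n : ℕ) (ω : Ω) : ℝ :=
  ∑ i ∈ Icc 1 n, max (ξ i ω) 0 ^ β
    + ∑ i ∈ Icc 1 n, μ[fun ω' => max (-ξ i ω') 0 ^ β | 𝔉 (i - 1)] ω

section selfNormalizer

variable {𝔉 : ℕ → MeasurableSpace Ω} {ξ : ℕ → Ω → ℝ} {β : ℝ}

lemma selfNormalizer_succ (n : ℕ) (ω : Ω) :
    selfNormalizer μ 𝔉 ξ β (n + 1) ω = selfNormalizer μ 𝔉 ξ β n ω + max (ξ (n + 1) ω) 0 ^ β
      + μ[fun ω' => max (-ξ (n + 1) ω') 0 ^ β | 𝔉 n] ω := by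
  simp only [selfNormalizer, sum_Icc_succ_top (Nat.le_add_left 1 n), Nat.add_sub_cancel]
  ring

lemma ae_condExp_rpow_max_neg_nonneg :
    ∀ᵐ ω ∂μ, ∀ i, 0 ≤ μ[fun ω' => max (-ξ i ω') 0 ^ β | 𝔉 (i - 1)] ω :=
  ae_all_iff.2 fun _ => condExp_nonneg (ae_of_all _ fun _ => rpow_nonneg (le_max_right _ _) β)

lemma selfNormalizer_nonneg (n : ℕ) : 0 ≤ᵐ[μ] selfNormalizer μ 𝔉 ξ β n := by
  filter_upwards [ae_condExp_rpow_max_neg_nonneg] with ω hω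
  exact add_nonneg (sum_nonneg fun i _ => rpow_nonneg (le_max_right _ _) β)
    (sum_nonneg fun i _ => hω i)

lemma sum_sub_selfNormalizer_le (hβ : 1 ≤ β) (n : ℕ) :
    ∀ᵐ ω ∂μ, ∑ i ∈ Icc 1 n, ξ i ω - selfNormalizer μ 𝔉 ξ β n ω ≤ n := by
  filter_upwards [ae_condExp_rpow_max_neg_nonneg] with ω hω
  have hpos : ∑ i ∈ Icc 1 n, (ξ i ω - max (ξ i ω) 0 ^ β) ≤ n := by
    simpa using sum_le_sum fun i (_ : i ∈ Icc 1 n) => sub_rpow_max_le_one hβ (ξ i ω)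
  have hneg := sum_nonneg fun i (_ : i ∈ Icc 1 n) => hω i
  rw [sum_sub_distrib] at hpos
  rw [selfNormalizer]
  linarith

lemma stronglyMeasurable_selfNormalizer (hmono : Monotone 𝔉)
    (hadp : ∀ i, StronglyMeasurable[𝔉 i] (ξ i)) (n : ℕ) :
    StronglyMeasurable[𝔉 n] (selfNormalizer μ 𝔉 ξ β n) := by
  refine .add (stronglyMeasurable_fun_sum _ fun i hi => ?_)
    (stronglyMeasurable_fun_sum _ fun i hi => ?_)
  · exact ((measurable_rpow_max β).comp
      ((hadp i).mono (hmono (mem_Icc.1 hi).2)).measurable).stronglyMeasurable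
  · exact stronglyMeasurable_condExp.mono (hmono (by grind))

lemma stronglyMeasurable_sum_sub_selfNormalizer (hmono : Monotone 𝔉)
    (hadp : ∀ i, StronglyMeasurable[𝔉 i] (ξ i)) (n : ℕ) :
    StronglyMeasurable[𝔉 n] fun ω => ∑ i ∈ Icc 1 n, ξ i ω - selfNormalizer μ 𝔉 ξ β n ω :=
  (stronglyMeasurable_fun_sum _ fun i hi => (hadp i).mono (hmono (mem_Icc.1 hi).2)).sub
    (stronglyMeasurable_selfNormalizer hmono hadp n)

lemma integrable_exp_sum_sub_selfNormalizer [IsFiniteMeasure μ] (hle : ∀ i, 𝔉 i ≤ m)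
    (hmono : Monotone 𝔉) (hadp : ∀ i, StronglyMeasurable[𝔉 i] (ξ i)) (hβ : 1 ≤ β) (n : ℕ) :
    Integrable (fun ω => exp (∑ i ∈ Icc 1 n, ξ i ω - selfNormalizer μ 𝔉 ξ β n ω)) μ := by
  refine (integrable_const (exp n)).mono' (continuous_exp.comp_stronglyMeasurable
    ((stronglyMeasurable_sum_sub_selfNormalizer hmono hadp n).mono (hle n))).aestronglyMeasurable ?_
  filter_upwards [sum_sub_selfNormalizer_le hβ n] with ω hω
  simpa using hω

theorem integral_exp_sum_sub_selfNormalizer_le_one [IsProbabilityMeasure μ]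
    (hle : ∀ i, 𝔉 i ≤ m) (hmono : Monotone 𝔉) (hadp : ∀ i, StronglyMeasurable[𝔉 i] (ξ i))
    (hβ1 : 1 ≤ β) (hβ2 : β ≤ 2) (hmom : ∀ i, Integrable (fun ω => |ξ i ω| ^ β) μ)
    (hmart : ∀ i, 1 ≤ i → μ[ξ i | 𝔉 (i - 1)] =ᵐ[μ] 0) (n : ℕ) :
    ∫ ω, exp (∑ i ∈ Icc 1 n, ξ i ω - selfNormalizer μ 𝔉 ξ β n ω) ∂μ ≤ 1 := by
  induction n with
  | zero => simp [selfNormalizer]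
  | succ n ih =>
    calc ∫ ω, exp (∑ i ∈ Icc 1 (n + 1), ξ i ω - selfNormalizer μ 𝔉 ξ β (n + 1) ω) ∂μ
        = ∫ ω, exp (∑ i ∈ Icc 1 n, ξ i ω - selfNormalizer μ 𝔉 ξ β n ω)
            * exp (ξ (n + 1) ω - max (ξ (n + 1) ω) 0 ^ β
              - μ[fun ω' => max (-ξ (n + 1) ω') 0 ^ β | 𝔉 n] ω) ∂μ := by
          congr 1 with ω
          rw [sum_Icc_succ_top (Nat.le_add_left 1 n), selfNormalizer_succ, ← exp_add]
          congr 1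
          ring
      _ ≤ ∫ ω, exp (∑ i ∈ Icc 1 n, ξ i ω - selfNormalizer μ 𝔉 ξ β n ω) ∂μ :=
          integral_mul_exp_sub_condExp_le (hle n) hβ1 hβ2
            ((hadp (n + 1)).mono (hle _)).aestronglyMeasurable (hmom _)
            (by simpa using hmart (n + 1) (Nat.le_add_left 1 n))
            (continuous_exp.comp_stronglyMeasurable
              (stronglyMeasurable_sum_sub_selfNormalizer hmono hadp n))
            (fun _ => (exp_pos _).le) (integrable_exp_sum_sub_selfNormalizer hle hmono hadp hβ1 n)
      _ ≤ 1 := ih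

lemma rpow_max_const_mul {L : ℝ} (hL : 0 ≤ L) (t : ℝ) :
    max (L * t) 0 ^ β = L ^ β * max t 0 ^ β := by
  rw [← mul_rpow hL (le_max_right t 0), mul_max_of_nonneg _ _ hL, mul_zero]

lemma selfNormalizer_const_mul {L : ℝ} (hL : 0 ≤ L) (n : ℕ) :
    selfNormalizer μ 𝔉 (fun i ω => L * ξ i ω) β n
      =ᵐ[μ] fun ω => L ^ β * selfNormalizer μ 𝔉 ξ β n ω := by
  have hcond : ∀ᵐ ω ∂μ, ∀ i, μ[fun ω' => max (-(L * ξ i ω')) 0 ^ β | 𝔉 (i - 1)] ω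
      = L ^ β * μ[fun ω' => max (-ξ i ω') 0 ^ β | 𝔉 (i - 1)] ω := by
    refine ae_all_iff.2 fun i => ?_
    simp_rw [← mul_neg, rpow_max_const_mul hL]
    exact condExp_smul (L ^ β) (fun ω' => max (-ξ i ω') 0 ^ β) _
  filter_upwards [hcond] with ω hω
  simp only [selfNormalizer, hω, rpow_max_const_mul hL, ← mul_sum, mul_add]

theorem integrable_and_integral_exp_mul_sum_sub_le_one [IsProbabilityMeasure μ]
    (hle : ∀ i, 𝔉 i ≤ m) (hmono : Monotone 𝔉) (hadp : ∀ i, StronglyMeasurable[𝔉 i] (ξ i))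
    (hβ1 : 1 ≤ β) (hβ2 : β ≤ 2) (hmom : ∀ i, Integrable (fun ω => |ξ i ω| ^ β) μ)
    (hmart : ∀ i, 1 ≤ i → μ[ξ i | 𝔉 (i - 1)] =ᵐ[μ] 0) (n : ℕ) {L : ℝ} (hL : 0 ≤ L) :
    Integrable (fun ω => exp (L * ∑ i ∈ Icc 1 n, ξ i ω - L ^ β * selfNormalizer μ 𝔉 ξ β n ω)) μ
      ∧ ∫ ω, exp (L * ∑ i ∈ Icc 1 n, ξ i ω - L ^ β * selfNormalizer μ 𝔉 ξ β n ω) ∂μ ≤ 1 := by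
  have hadpL : ∀ i, StronglyMeasurable[𝔉 i] fun ω => L * ξ i ω := fun i => (hadp i).const_mul L
  have hmomL : ∀ i, Integrable (fun ω => |L * ξ i ω| ^ β) μ := fun i => by
    simpa only [abs_mul, mul_rpow (abs_nonneg L) (abs_nonneg _)] using (hmom i).const_mul (|L| ^ β)
  have hmartL : ∀ i, 1 ≤ i → μ[fun ω => L * ξ i ω | 𝔉 (i - 1)] =ᵐ[μ] 0 := fun i hi => by
    filter_upwards [condExp_smul L (ξ i) (𝔉 (i - 1)), hmart i hi] with ω h1 h2
    simp [← smul_eq_mul, ← Pi.smul_def, h1, h2]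
  have hscale : (fun ω => exp (∑ i ∈ Icc 1 n, L * ξ i ω
      - selfNormalizer μ 𝔉 (fun i ω => L * ξ i ω) β n ω))
      =ᵐ[μ] fun ω => exp (L * ∑ i ∈ Icc 1 n, ξ i ω - L ^ β * selfNormalizer μ 𝔉 ξ β n ω) := by
    filter_upwards [selfNormalizer_const_mul hL n] with ω hω
    rw [hω, mul_sum]
  exact ⟨(integrable_exp_sum_sub_selfNormalizer hle hmono hadpL hβ1 n).congr hscale,
    (integral_congr_ae hscale).symm.trans_le
      (integral_exp_sum_sub_selfNormalizer_le_one hle hmono hadpL hβ1 hβ2 hmomL hmartL n)⟩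

end selfNormalizer

lemma sub_one_mul_rpow_mul_le {β L x g s : ℝ} (hβ : 0 < β) (hL : 0 < L)
    (hL1 : L ^ (β - 1) = x / β) (h : x * g ≤ s) : (β - 1) * L ^ β * g ≤ L * s - L ^ β * g := by
  have hLx : β * L ^ β = L * x := by
    rw [rpow_sub_one hL.ne', div_eq_div_iff hL.ne' hβ.ne'] at hL1
    linarith
  have hLs := mul_le_mul_of_nonneg_left h hL.le
  rw [← mul_assoc, ← hLx] at hLs
  linarith

theorem measureReal_le_integral_exp_rpow [IsFiniteMeasure μ] {Φ W : Ω → ℝ} {A : Set Ω} {p : ℝ}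
    (hp : 1 < p) (hA : MeasurableSet A) (hΦm : AEStronglyMeasurable Φ μ)
    (hΦi : Integrable (fun ω => exp (Φ ω)) μ) (hΦ1 : ∫ ω, exp (Φ ω) ∂μ ≤ 1)
    (hWm : AEStronglyMeasurable W μ) (hW0 : 0 ≤ᵐ[μ] W) (hWA : ∀ ω ∈ A, W ω ≤ Φ ω) :
    μ.real A ≤ (∫ ω, exp (-(p - 1) * W ω) ∂μ) ^ (1 / p) := by
  set q := p.conjExponent
  have hpq : p.HolderConjugate q := .conjExponent hp
  have hq : 0 < q := hpq.symm.pos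
  have hpq' : p / q = p - 1 := by
    simp only [q, Real.conjExponent]
    field_simp
  set u := fun ω => exp (Φ ω / q)
  set v := fun ω => exp (-W ω / q)
  have hu_pow : ∀ ω, u ω ^ q = exp (Φ ω) := fun ω => by
    rw [← exp_mul, div_mul_cancel₀ _ hq.ne']
  have hv_pow : ∀ ω, v ω ^ p = exp (-(p - 1) * W ω) := fun ω => by
    rw [← exp_mul, ← hpq']
    ring_nf
  have hu : MemLp u (ENNReal.ofReal q) μ := by
    refine (integrable_norm_rpow_iff (f := u) (measurable_exp.comp_aemeasurable
      (hΦm.aemeasurable.div_const q)).aestronglyMeasurable (by simpa using hq)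
        ENNReal.ofReal_ne_top).1 ?_
    rw [ENNReal.toReal_ofReal hq.le]
    refine hΦi.congr (ae_of_all _ fun ω => ?_)
    show exp (Φ ω) = ‖u ω‖ ^ q
    rw [← hu_pow]
    exact congrArg (· ^ q) (norm_of_nonneg (exp_pos _).le).symm
  have hv_top : MemLp v ⊤ μ := by
    refine memLp_top_of_bound (measurable_exp.comp_aemeasurable
      (hWm.aemeasurable.neg.div_const q)).aestronglyMeasurable 1 ?_
    filter_upwards [hW0] with ω hω
    rw [norm_of_nonneg (exp_pos _).le]
    exact exp_le_one_iff.2 (div_nonpos_of_nonpos_of_nonneg (neg_nonpos.2 hω) hq.le)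
  have hind : A.indicator 1 ≤ᵐ[μ] fun ω => u ω * v ω := ae_of_all _ fun ω => by
    by_cases hω : ω ∈ A
    · simp only [Set.indicator_of_mem hω, Pi.one_apply, u, v, ← exp_add, ← add_div]
      exact one_le_exp (div_nonneg (by linarith [hWA ω hω]) hq.le)
    · rw [Set.indicator_of_notMem hω]
      positivity
  calc μ.real A = ∫ ω, A.indicator 1 ω ∂μ := by
        simp [integral_indicator_one hA]
    _ ≤ ∫ ω, u ω * v ω ∂μ :=
        integral_mono_ae ((integrable_const 1).indicator hA)
          ((hu.integrable (ENNReal.one_le_ofReal.2 hpq.symm.lt.le)).mul_of_top_left hv_top) hind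
    _ ≤ (∫ ω, u ω ^ q ∂μ) ^ (1 / q) * (∫ ω, v ω ^ p ∂μ) ^ (1 / p) :=
        integral_mul_le_Lp_mul_Lq_of_nonneg hpq.symm (ae_of_all _ fun _ => (exp_pos _).le)
          (ae_of_all _ fun _ => (exp_pos _).le) hu (hv_top.mono_exponent le_top)
    _ ≤ 1 * (∫ ω, exp (-(p - 1) * W ω) ∂μ) ^ (1 / p) := by
        simp only [hu_pow, hv_pow]
        gcongr
        exact rpow_le_one (integral_nonneg fun _ => (exp_pos _).le) hΦ1 (by positivity)
    _ = _ := one_mul _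

end SelfNormalizedMartingale

open SelfNormalizedMartingale

theorem stmt_14 {Ω : Type*} {m : MeasurableSpace Ω} {μ : Measure Ω} [IsProbabilityMeasure μ]
    (𝔉 : ℕ → MeasurableSpace Ω) (hle : ∀ i, 𝔉 i ≤ m) (hmono : Monotone 𝔉)
    (ξ : ℕ → Ω → ℝ)
    (hadp : ∀ i, StronglyMeasurable[𝔉 i] (ξ i))
    (β : ℝ) (hβ1 : 1 < β) (hβ2 : β < 2)
    (hmom : ∀ i, Integrable (fun ω => |ξ i ω| ^ β) μ)
    (hmart : ∀ i : ℕ, 1 ≤ i → μ[ξ i | 𝔉 (i - 1)] =ᵐ[μ] 0)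
    (n : ℕ) (x p : ℝ) (hx : 0 < x) (hp : 1 < p)
    (S G : Ω → ℝ)
    (hS : S = fun ω => ∑ i ∈ Finset.Icc 1 n, ξ i ω)
    (hG : G = fun ω =>
      (∑ i ∈ Finset.Icc 1 n, (max (ξ i ω) 0) ^ β)
        + ∑ i ∈ Finset.Icc 1 n, (μ[fun ω' => (max (-(ξ i ω')) 0) ^ β | 𝔉 (i - 1)]) ω) :
    (μ {ω | x * G ω ≤ S ω}).toReal ≤
      (∫ ω, Real.exp ((p - 1) * (x / β) ^ (β / (β - 1)) * (1 - β) * G ω) ∂μ) ^ (1 / p) := by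
  obtain rfl : G = selfNormalizer μ 𝔉 ξ β n := hG
  subst hS
  have hxβ : 0 < x / β := div_pos hx (by linarith)
  -- `L` maximizes `λ ↦ λ x - λ ^ β`.
  set L := (x / β) ^ (β - 1)⁻¹ with hLdef
  have hL : 0 < L := rpow_pos_of_pos hxβ _
  have hL1 : L ^ (β - 1) = x / β := by
    rw [hLdef, ← rpow_mul hxβ.le, inv_mul_cancel₀ (by linarith), rpow_one]
  rw [show (x / β) ^ (β / (β - 1)) = L ^ β by rw [hLdef, ← rpow_mul hxβ.le, inv_mul_eq_div]]
  obtain ⟨hint, hone⟩ :=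
    integrable_and_integral_exp_mul_sum_sub_le_one hle hmono hadp hβ1.le hβ2.le hmom hmart n hL.le
  have hG := (stronglyMeasurable_selfNormalizer (μ := μ) (β := β) hmono hadp n).mono (hle n)
  have hS := stronglyMeasurable_fun_sum (Icc 1 n) fun i _ => (hadp i).mono (hle i)
  refine (measureReal_le_integral_exp_rpow hp
    (measurableSet_le (hG.measurable.const_mul x) hS.measurable)
    ((hS.const_mul L).sub (hG.const_mul _)).aestronglyMeasurable hint hone
    (hG.const_mul _).aestronglyMeasurable
    ((selfNormalizer_nonneg n).mono fun ω hω =>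
      mul_nonneg (mul_nonneg (by linarith) (rpow_nonneg hL.le β)) hω)
    fun ω hω => sub_one_mul_rpow_mul_le (by linarith) hL hL1 hω).trans_eq ?_
  congr 2 with ω
  congr 1
  ring
end
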